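/- Fix d ≥ 2, δ > 0 with 18d·[δ + δ·log(1/δ)] ≤ log 3, and an integer n_1 such that k_1 := 3δn_1 is an integer with k_1 ≥ 1; set n_l = l·n_1 and k_l = l·k_1. Let Γ be the set of the iterated triadic construction with these parameters and let ν = μ × ⋯ × μ be the d-fold product of the measure μ of the construction. Then ν(Γ) ≥ exp{ − d·Z/(1−Z)^2 } where Z = exp(−2δ²n_1); in particular ν(Γ) > 0. -/

import Mathlib

open MeasureTheory Set

noncomputable section

/-- The number of ternary (base-3) digits of `i` equal to `1`. -/
def ternaryOnes (i : ℕ) : ℕ := (Nat.digits 3 i).count 1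

/-- The triadic mass assignment determining the measure `μ`. -/
def ternarySpec (δ : ℝ) (μ : Measure ℝ) : Prop :=
  ∀ (j : ℤ) (n i : ℕ), i < 3 ^ n →
    μ (Set.Ico ((j : ℝ) + (i : ℝ) / 3 ^ n) ((j : ℝ) + ((i : ℝ) + 1) / 3 ^ n)) =
      ENNReal.ofReal (δ ^ (n - ternaryOnes i) * (1 - 2 * δ) ^ ternaryOnes i)

/-- The triadic interval `[i·3⁻ⁿ, (i+1)·3⁻ⁿ) ⊆ [0,1)` of generation `n`, `0 ≤ i < 3 ^ n`. -/
def triIco (n i : ℕ) : Set ℝ := Set.Ico ((i : ℝ) / 3 ^ n) (((i : ℝ) + 1) / 3 ^ n)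

/-- Indices `0 ≤ i < 3 ^ n` of the "heavy" triadic intervals of generation `n` inside `[0,1)`,
those with `μ(I) ≥ δ ^ k · (1 - 2δ) ^ (n - k)`. -/
def goodIdx (δ : ℝ) (μ : Measure ℝ) (n k : ℕ) : Set ℕ :=
  {i | i < 3 ^ n ∧ ENNReal.ofReal (δ ^ k * (1 - 2 * δ) ^ (n - k)) ≤ μ (triIco n i)}

/-- `K(n,k)`: the union of the triadic intervals `I ⊆ [0,1)` of generation `n` with
`μ(I) ≥ δ ^ k · (1 - 2δ) ^ (n - k)`. -/
def Kset (δ : ℝ) (μ : Measure ℝ) (n k : ℕ) : Set ℝ := ⋃ i ∈ goodIdx δ μ n k, triIco n i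

/-- The gaps of a set `K ⊆ ℝ`: the bounded connected components of `ℝ \ K`. -/
def gaps (K : Set ℝ) : Set (Set ℝ) :=
  {C | Bornology.IsBounded C ∧ ∃ x ∈ Kᶜ, C = connectedComponentIn Kᶜ x}

/-- The skeleton of the box `I 0 × ⋯ × I (d-1)`: the union over `j` of the products
`∂I 0 × ⋯ × ∂I (j-1) × I j × ∂I (j+1) × ⋯ × ∂I (d-1)`, i.e. the union of the
one-dimensional edges of the box. -/
def Sk (d : ℕ) (I : Fin d → Set ℝ) : Set (Fin d → ℝ) :=
  ⋃ j : Fin d, Set.pi Set.univ fun m => if m = j then I m else frontier (I m)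

/-- `Γ(n,k)`: the union of the skeletons of the cubes of `𝒦^d(n,k)` together with the
skeletons of all boxes `I₁ × ⋯ × I_d` with each `Iⱼ` a gap of `K(n,k)`. -/
def GammaNK (d : ℕ) (δ : ℝ) (μ : Measure ℝ) (n k : ℕ) : Set (Fin d → ℝ) :=
  (⋃ f ∈ {f : Fin d → ℕ | ∀ j, f j ∈ goodIdx δ μ n k}, Sk d fun j => triIco n (f j)) ∪
    ⋃ I ∈ {I : Fin d → Set ℝ | ∀ j, I j ∈ gaps (Kset δ μ n k)}, Sk d I

/-- The data (lower-left corner, side length) of the cubes of the `l`-th generation `𝒦_l` of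
the iterated construction: `𝒦₀ = {[0,1)^d}` and `𝒦_l` is obtained from `𝒦_{l-1}` by replacing
each cube `Q` by the images under the affine map `A_Q` (taking `[0,1)^d` onto `Q`) of the
cubes of `𝒦^d(n_l, k_l)`. -/
def KData (d : ℕ) (δ : ℝ) (μ : Measure ℝ) (ns ks : ℕ → ℕ) : ℕ → Set ((Fin d → ℝ) × ℝ)
  | 0 => {(fun _ => 0, 1)}
  | l + 1 =>
    {q | ∃ p ∈ KData d δ μ ns ks l, ∃ f : Fin d → ℕ,
      (∀ j, f j ∈ goodIdx δ μ (ns (l + 1)) (ks (l + 1))) ∧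
      q.1 = (fun j => p.1 j + p.2 * (f j : ℝ) / 3 ^ ns (l + 1)) ∧
      q.2 = p.2 / 3 ^ ns (l + 1)}

/-- The half-open cube with lower-left corner `p.1` and side length `p.2`. -/
def cubeOf (d : ℕ) (p : (Fin d → ℝ) × ℝ) : Set (Fin d → ℝ) :=
  Set.pi Set.univ fun j => Set.Ico (p.1 j) (p.1 j + p.2)

/-- `K_l`, the union of the cubes of the collection `𝒦_l`. -/
def bigK (d : ℕ) (δ : ℝ) (μ : Measure ℝ) (ns ks : ℕ → ℕ) (l : ℕ) : Set (Fin d → ℝ) :=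
  ⋃ p ∈ KData d δ μ ns ks l, cubeOf d p

/-- The set `Γ` of the iterated construction: the skeleton of `[0,1)^d`, together with, for
every `l ≥ 1` and every cube `Q ∈ 𝒦_{l-1}`, the image `A_Q(Γ(n_l, k_l))`, together with the
nested intersection `⋂_{l ≥ 1} K_l`. -/
def GammaFull (d : ℕ) (δ : ℝ) (μ : Measure ℝ) (ns ks : ℕ → ℕ) : Set (Fin d → ℝ) :=
  Sk d (fun _ => Set.Ico (0 : ℝ) 1) ∪
    (⋃ l ∈ {l : ℕ | 1 ≤ l}, ⋃ p ∈ KData d δ μ ns ks (l - 1),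
      (fun x j => p.1 j + p.2 * x j) '' GammaNK d δ μ (ns l) (ks l)) ∪
    ⋂ l ∈ {l : ℕ | 1 ≤ l}, bigK d δ μ ns ks l

/-!
`Γ` contains `⋂ₗ K_l`, and `K_l = L_lᵈ` where `L_l ⊆ [0,1)` is the union of the triadic intervals
whose products make up `𝒦_l`. The masses of triadic intervals multiply under concatenation of
digit strings, `μ(I_{N+n}(a·3ⁿ+b)) = μ(I_N(a)) μ(I_n(b))`, so `μ(L_l) = ∏_{m ≤ l} μ(K(n_m,k_m))`.
An interval of generation `n` can only fail to be heavy if fewer than `n - k` of its digits are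
`1`; an exponential Markov bound on the number of digits different from `1` gives mass at most
`(1+2δ)ⁿ 2⁻ᵏ ≤ exp(-2δ²n)` to those intervals, once `k = 3δn` and `δ ≤ 1/27` (which the hypothesis
on `δ` forces). Hence `μ(L_l) ≥ ∏ₘ (1 - Zᵐ) ≥ exp(-Z/(1-Z)²)`, and continuity from above and the
product structure of `ν` give `ν(Γ) ≥ ν(⋂ₗ K_l) ≥ exp(-Z/(1-Z)²)ᵈ`.
-/

lemma ternaryOnes_le_of_lt_pow {n i : ℕ} (hi : i < 3 ^ n) : ternaryOnes i ≤ n :=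
  List.count_le_length.trans ((Nat.digits_length_le_iff (by norm_num) i).2 hi)

lemma ternaryOnes_mul_pow_add (a : ℕ) {n b : ℕ} (hb : b < 3 ^ n) :
    ternaryOnes (a * 3 ^ n + b) = ternaryOnes a + ternaryOnes b := by
  rcases Nat.eq_zero_or_pos a with rfl | ha
  · simp [ternaryOnes]
  have hlen := (Nat.digits_length_le_iff (by norm_num) b).2 hb
  have h := Nat.digits_append_zeroes_append_digits (n := b) (k := n - (Nat.digits 3 b).length)
    (by norm_num : 1 < 3) ha
  rw [Nat.add_sub_cancel' hlen] at h
  rw [ternaryOnes, ternaryOnes, ternaryOnes, add_comm, mul_comm, ← h]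
  simp [List.count_replicate, add_comm]

lemma mul_pow_add_lt_pow_add {N n a b : ℕ} (ha : a < 3 ^ N) (hb : b < 3 ^ n) :
    a * 3 ^ n + b < 3 ^ (N + n) :=
  calc a * 3 ^ n + b < (a + 1) * 3 ^ n := by linarith
    _ ≤ 3 ^ N * 3 ^ n := Nat.mul_le_mul_right _ ha
    _ = 3 ^ (N + n) := (pow_add _ _ _).symm

lemma mul_add_injOn (m : ℕ) : Set.InjOn (fun p : ℕ × ℕ => p.1 * m + p.2) {p | p.2 < m} := by
  intro p hp q hq h
  have hm : 0 < m := (Nat.zero_le _).trans_lt hp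
  have hp' := (Nat.div_mod_unique hm).2 ⟨(by ring : p.2 + m * p.1 = p.1 * m + p.2), hp⟩
  have hq' := (Nat.div_mod_unique hm).2 ⟨(by ring : q.2 + m * q.1 = q.1 * m + q.2), hq⟩
  simp only at h
  rw [h] at hp'
  exact Prod.ext (hp'.1.symm.trans hq'.1) (hp'.2.symm.trans hq'.2)

def ternaryWeight (x y : ℝ) (n i : ℕ) : ℝ := x ^ (n - ternaryOnes i) * y ^ ternaryOnes i

lemma ternaryWeight_nonneg {x y : ℝ} (hx : 0 ≤ x) (hy : 0 ≤ y) (n i : ℕ) :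
    0 ≤ ternaryWeight x y n i := by
  unfold ternaryWeight; positivity

lemma ternaryWeight_mul_pow_add (x y : ℝ) {N n a b : ℕ} (ha : a < 3 ^ N) (hb : b < 3 ^ n) :
    ternaryWeight x y (N + n) (a * 3 ^ n + b) = ternaryWeight x y N a * ternaryWeight x y n b := by
  have hoa := ternaryOnes_le_of_lt_pow ha
  have hob := ternaryOnes_le_of_lt_pow hb
  rw [ternaryWeight, ternaryWeight, ternaryWeight, ternaryOnes_mul_pow_add a hb,
    show N + n - (ternaryOnes a + ternaryOnes b)
      = (N - ternaryOnes a) + (n - ternaryOnes b) by omega, pow_add, pow_add]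
  ring

lemma sum_range_mul_eq_sum_sum {M : Type*} [AddCommMonoid M] (f : ℕ → M) (m k : ℕ) :
    ∑ i ∈ Finset.range (m * k), f i =
      ∑ a ∈ Finset.range m, ∑ b ∈ Finset.range k, f (a * k + b) := by
  induction m with
  | zero => simp
  | succ m ih => rw [Nat.succ_mul, Finset.sum_range_add, ih, Finset.sum_range_succ]

lemma sum_ternaryWeight (x y : ℝ) (n : ℕ) :
    ∑ i ∈ Finset.range (3 ^ n), ternaryWeight x y n i = (2 * x + y) ^ n := by
  induction n with
  | zero => simp [ternaryWeight, ternaryOnes]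
  | succ n ih =>
    have hdigit : ∑ b ∈ Finset.range 3, ternaryWeight x y 1 b = 2 * x + y := by
      simp [Finset.sum_range_succ, ternaryWeight, ternaryOnes, two_mul, add_comm, add_left_comm]
    rw [pow_succ, sum_range_mul_eq_sum_sum, pow_succ, ← ih, Finset.sum_mul]
    refine Finset.sum_congr rfl fun a ha => ?_
    rw [← hdigit, Finset.mul_sum]
    exact Finset.sum_congr rfl fun b hb =>
      ternaryWeight_mul_pow_add x y (Finset.mem_range.1 ha) (by simpa using hb)

lemma pow_mul_pow_le_ternaryWeight {x y : ℝ} (hx : 0 ≤ x) (hxy : x ≤ y) {n k i : ℕ}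
    (hk : k ≤ n) (hi : i < 3 ^ n) (hi' : n - k ≤ ternaryOnes i) :
    x ^ k * y ^ (n - k) ≤ ternaryWeight x y n i := by
  have ho := ternaryOnes_le_of_lt_pow hi
  set t := ternaryOnes i - (n - k)
  have hxk : x ^ k = x ^ (n - ternaryOnes i) * x ^ t := by rw [← pow_add]; congr 1; omega
  have hyo : y ^ ternaryOnes i = y ^ (n - k) * y ^ t := by rw [← pow_add]; congr 1; omega
  have hy : 0 ≤ y := hx.trans hxy
  calc x ^ k * y ^ (n - k) = x ^ (n - ternaryOnes i) * (y ^ (n - k) * x ^ t) := by rw [hxk]; ring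
    _ ≤ x ^ (n - ternaryOnes i) * (y ^ (n - k) * y ^ t) := by gcongr
    _ = ternaryWeight x y n i := by rw [ternaryWeight, hyo]

-- Exponential Markov inequality for the number of digits different from `1`.
lemma sum_ternaryWeight_filter_le {x y : ℝ} (hx : 0 ≤ x) (hy : 0 ≤ y) (n k : ℕ) :
    ∑ i ∈ (Finset.range (3 ^ n)).filter (fun i => ternaryOnes i < n - k), ternaryWeight x y n i
      ≤ (4 * x + y) ^ n / 2 ^ k := by
  have hterm : ∀ i ∈ (Finset.range (3 ^ n)).filter (fun i => ternaryOnes i < n - k),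
      ternaryWeight x y n i ≤ ternaryWeight (2 * x) y n i / 2 ^ k := by
    intro i hi
    have h2 : (2 : ℝ) ^ k ≤ 2 ^ (n - ternaryOnes i) :=
      pow_le_pow_right₀ one_le_two (by have := (Finset.mem_filter.1 hi).2; omega)
    rw [le_div_iff₀ (by positivity), ternaryWeight, ternaryWeight, mul_pow]
    calc _ ≤ x ^ (n - ternaryOnes i) * y ^ ternaryOnes i * 2 ^ (n - ternaryOnes i) := by gcongr
      _ = _ := by ring
  calc _ ≤ ∑ i ∈ Finset.range (3 ^ n), ternaryWeight (2 * x) y n i / 2 ^ k :=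
        (Finset.sum_le_sum hterm).trans <| Finset.sum_le_sum_of_subset_of_nonneg
          (Finset.filter_subset _ _) fun i _ _ =>
            div_nonneg (ternaryWeight_nonneg (by positivity) hy n i) (by positivity)
    _ = (4 * x + y) ^ n / 2 ^ k := by rw [← Finset.sum_div, sum_ternaryWeight]; ring_nf

section TriadicMeasure

variable {δ : ℝ} {μ : Measure ℝ}

lemma measure_triIco (hμ : ternarySpec δ μ) {n i : ℕ} (hi : i < 3 ^ n) :
    μ (triIco n i) = ENNReal.ofReal (ternaryWeight δ (1 - 2 * δ) n i) := by
  simpa [triIco, ternaryWeight] using hμ 0 n i hi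

lemma sigmaFinite_of_ternarySpec (hμ : ternarySpec δ μ) : SigmaFinite μ := by
  refine Measure.sigmaFinite_of_countable (S := Set.range fun j : ℤ => Ico (j : ℝ) (j + 1))
    (countable_range _) ?_ (by rw [sUnion_range]; exact iUnion_Ico_intCast ℝ)
  rintro _ ⟨j, rfl⟩
  simpa using (hμ j 0 0 one_pos).trans_lt ENNReal.ofReal_lt_top

lemma triIco_disjoint (n : ℕ) {i i' : ℕ} (h : i ≠ i') : Disjoint (triIco n i) (triIco n i') := by
  refine Set.disjoint_left.2 fun x hx hx' => h ?_
  have h3 : (0 : ℝ) < 3 ^ n := by positivity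
  simp only [triIco, mem_Ico, div_le_iff₀ h3, lt_div_iff₀ h3] at hx hx'
  have h1 : (i : ℝ) < i' + 1 := by linarith
  have h2 : (i' : ℝ) < i + 1 := by linarith
  norm_cast at h1 h2
  omega

lemma triIco_mul_pow_add_subset (N a : ℕ) {n b : ℕ} (hb : b < 3 ^ n) :
    triIco (N + n) (a * 3 ^ n + b) ⊆ triIco N a := by
  have hb' : (b : ℝ) + 1 ≤ 3 ^ n := by exact_mod_cast hb
  have h3 : (0 : ℝ) < 3 ^ n := by positivity
  simp only [triIco, pow_add, mul_comm (3 ^ N : ℝ), ← div_div]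
  refine Ico_subset_Ico ?_ ?_ <;> gcongr <;> push_cast
  · rw [le_div_iff₀ h3]; nlinarith
  · rw [div_le_iff₀ h3]; nlinarith

lemma measure_triIco_mul_pow_add (hμ : ternarySpec δ μ) (hδ0 : 0 ≤ δ) (hδ : δ ≤ 1 / 2)
    {N n a b : ℕ} (ha : a < 3 ^ N) (hb : b < 3 ^ n) :
    μ (triIco (N + n) (a * 3 ^ n + b)) = μ (triIco N a) * μ (triIco n b) := by
  rw [measure_triIco hμ ha, measure_triIco hμ hb, measure_triIco hμ (mul_pow_add_lt_pow_add ha hb),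
    ternaryWeight_mul_pow_add _ _ ha hb,
    ENNReal.ofReal_mul (ternaryWeight_nonneg hδ0 (by linarith) _ _)]

lemma measure_biUnion_triIco (n : ℕ) (s : Finset ℕ) :
    μ (⋃ i ∈ s, triIco n i) = ∑ i ∈ s, μ (triIco n i) :=
  measure_biUnion_finset (fun _ _ _ _ h => triIco_disjoint n h) fun _ _ => measurableSet_Ico

end TriadicMeasure

-- `δ ≤ 1/27` is what makes `2 + 2δ ≤ 3 log 2`.
lemma one_add_two_mul_pow_div_le_exp {δ : ℝ} (hδ0 : 0 ≤ δ) (hδ : δ ≤ 1 / 27) {n k : ℕ}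
    (hk : (k : ℝ) = 3 * δ * n) :
    (1 + 2 * δ) ^ n / 2 ^ k ≤ Real.exp (-2 * δ ^ 2 * n) := by
  have h1 : (1 + 2 * δ) ^ n ≤ Real.exp (2 * δ * n) := by
    rw [mul_comm _ (n : ℝ), Real.exp_nat_mul]
    exact pow_le_pow_left₀ (by positivity) (by linarith [Real.add_one_le_exp (2 * δ)]) n
  have h2 : (2 : ℝ) ^ k = Real.exp (k * Real.log 2) := by
    rw [Real.exp_nat_mul, Real.exp_log two_pos]
  rw [div_le_iff₀ (by positivity), h2, ← Real.exp_add]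
  refine h1.trans (Real.exp_le_exp.2 ?_)
  rw [hk]
  have := Real.log_two_gt_d9
  nlinarith [mul_nonneg hδ0 (Nat.cast_nonneg n : (0 : ℝ) ≤ n)]

open Classical in
def goodFinset (δ : ℝ) (μ : Measure ℝ) (n k : ℕ) : Finset ℕ :=
  (Finset.range (3 ^ n)).filter (· ∈ goodIdx δ μ n k)

lemma coe_goodFinset (δ : ℝ) (μ : Measure ℝ) (n k : ℕ) :
    (goodFinset δ μ n k : Set ℕ) = goodIdx δ μ n k := by
  ext i
  simpa [goodFinset] using fun h : i ∈ goodIdx δ μ n k => h.1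

lemma Kset_eq_biUnion_goodFinset (δ : ℝ) (μ : Measure ℝ) (n k : ℕ) :
    Kset δ μ n k = ⋃ i ∈ goodFinset δ μ n k, triIco n i := by
  rw [Kset, ← coe_goodFinset, Finset.set_biUnion_coe]

lemma one_sub_exp_le_measure_Kset {δ : ℝ} {μ : Measure ℝ} (hμ : ternarySpec δ μ) (hδ0 : 0 < δ)
    (hδ : δ ≤ 1 / 27) {n k : ℕ} (hk : (k : ℝ) = 3 * δ * n) :
    ENNReal.ofReal (1 - Real.exp (-2 * δ ^ 2 * n)) ≤ μ (Kset δ μ n k) := by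
  set w := ternaryWeight δ (1 - 2 * δ) n
  set heavy := (Finset.range (3 ^ n)).filter fun i => ¬ ternaryOnes i < n - k
  have hkn : k ≤ n := by
    have : (k : ℝ) ≤ n := by rw [hk]; nlinarith [(Nat.cast_nonneg n : (0 : ℝ) ≤ n)]
    exact_mod_cast this
  have hheavy : heavy ⊆ goodFinset δ μ n k := by
    intro i hi
    simp only [heavy, Finset.mem_filter, Finset.mem_range, not_lt] at hi
    rw [← Finset.mem_coe, coe_goodFinset]
    refine ⟨hi.1, ?_⟩
    rw [measure_triIco hμ hi.1]
    exact ENNReal.ofReal_le_ofReal <|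
      pow_mul_pow_le_ternaryWeight hδ0.le (by linarith) hkn hi.1 hi.2
  have hmass : 1 - Real.exp (-2 * δ ^ 2 * n) ≤ ∑ i ∈ heavy, w i := by
    have htotal : ∑ i ∈ Finset.range (3 ^ n), w i = 1 := by
      rw [sum_ternaryWeight]; ring_nf
    have hlight := (sum_ternaryWeight_filter_le hδ0.le (by linarith : 0 ≤ 1 - 2 * δ) n k).trans
      (le_of_eq_of_le (by ring_nf) (one_add_two_mul_pow_div_le_exp hδ0.le hδ hk))
    linarith [Finset.sum_filter_add_sum_filter_not (Finset.range (3 ^ n))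
      (fun i => ternaryOnes i < n - k) w]
  calc ENNReal.ofReal (1 - Real.exp (-2 * δ ^ 2 * n))
      ≤ ENNReal.ofReal (∑ i ∈ heavy, w i) := ENNReal.ofReal_le_ofReal hmass
    _ = μ (⋃ i ∈ heavy, triIco n i) := by
      rw [measure_biUnion_triIco, ENNReal.ofReal_sum_of_nonneg fun i _ =>
        ternaryWeight_nonneg hδ0.le (by linarith) n i]
      exact Finset.sum_congr rfl fun i hi =>
        (measure_triIco hμ (Finset.mem_range.1 (Finset.mem_filter.1 hi).1)).symm
    _ ≤ μ (Kset δ μ n k) := by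
      rw [Kset_eq_biUnion_goodFinset]
      exact measure_mono (biUnion_subset_biUnion_left hheavy)

/-- `levelExp ns l = n₁ + ⋯ + n_l`: the cubes of `𝒦_l` have side `3 ^ (-levelExp ns l)`. -/
def levelExp (ns : ℕ → ℕ) : ℕ → ℕ
  | 0 => 0
  | l + 1 => levelExp ns l + ns (l + 1)

/-- The indices `i` for which `triIco (levelExp ns l) i` is a side of a cube of `𝒦_l`. -/
def levelIdx (δ : ℝ) (μ : Measure ℝ) (ns ks : ℕ → ℕ) : ℕ → Finset ℕ
  | 0 => {0}
  | l + 1 => (levelIdx δ μ ns ks l ×ˢ goodFinset δ μ (ns (l + 1)) (ks (l + 1))).image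
      fun p => p.1 * 3 ^ ns (l + 1) + p.2

/-- The one-dimensional factor of `K_l = (levelSet l) ^ d`. -/
def levelSet (δ : ℝ) (μ : Measure ℝ) (ns ks : ℕ → ℕ) (l : ℕ) : Set ℝ :=
  ⋃ i ∈ levelIdx δ μ ns ks l, triIco (levelExp ns l) i

section Levels

variable {δ : ℝ} {μ : Measure ℝ} {ns ks : ℕ → ℕ}

lemma lt_pow_of_mem_goodFinset {n k i : ℕ} (hi : i ∈ goodFinset δ μ n k) : i < 3 ^ n := by
  rw [← Finset.mem_coe, coe_goodFinset] at hi
  exact hi.1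

lemma mem_levelIdx_succ {l i : ℕ} : i ∈ levelIdx δ μ ns ks (l + 1) ↔
    ∃ a ∈ levelIdx δ μ ns ks l, ∃ b ∈ goodFinset δ μ (ns (l + 1)) (ks (l + 1)),
      a * 3 ^ ns (l + 1) + b = i := by
  simp [levelIdx, and_assoc]

lemma lt_pow_of_mem_levelIdx {l i : ℕ} (hi : i ∈ levelIdx δ μ ns ks l) : i < 3 ^ levelExp ns l := by
  induction l generalizing i with
  | zero => simp_all [levelIdx, levelExp]
  | succ l ih =>
    obtain ⟨a, ha, b, hb, rfl⟩ := mem_levelIdx_succ.1 hi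
    exact mul_pow_add_lt_pow_add (ih ha) (lt_pow_of_mem_goodFinset hb)

lemma levelSet_succ_subset (l : ℕ) : levelSet δ μ ns ks (l + 1) ⊆ levelSet δ μ ns ks l := by
  refine iUnion₂_subset fun i hi => ?_
  obtain ⟨a, ha, b, hb, rfl⟩ := mem_levelIdx_succ.1 hi
  exact (triIco_mul_pow_add_subset _ a (lt_pow_of_mem_goodFinset hb)).trans
    (subset_biUnion_of_mem (u := fun i => triIco (levelExp ns l) i) ha)

lemma measurableSet_levelSet (l : ℕ) : MeasurableSet (levelSet δ μ ns ks l) :=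
  Finset.measurableSet_biUnion _ fun _ _ => measurableSet_Ico

lemma measure_levelSet_succ (hμ : ternarySpec δ μ) (hδ0 : 0 ≤ δ) (hδ : δ ≤ 1 / 2) (l : ℕ) :
    μ (levelSet δ μ ns ks (l + 1)) =
      μ (levelSet δ μ ns ks l) * μ (Kset δ μ (ns (l + 1)) (ks (l + 1))) := by
  set n := ns (l + 1)
  have hinj : Set.InjOn (fun p : ℕ × ℕ => p.1 * 3 ^ n + p.2)
      (levelIdx δ μ ns ks l ×ˢ goodFinset δ μ n (ks (l + 1)) : Finset _) :=
    (mul_add_injOn _).mono fun p hp => lt_pow_of_mem_goodFinset (Finset.mem_product.1 hp).2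
  rw [levelSet, levelSet, Kset_eq_biUnion_goodFinset, measure_biUnion_triIco,
    measure_biUnion_triIco, measure_biUnion_triIco, Finset.sum_mul_sum, ← Finset.sum_product',
    levelIdx, Finset.sum_image hinj]
  refine Finset.sum_congr rfl fun p hp => ?_
  obtain ⟨ha, hb⟩ := Finset.mem_product.1 hp
  exact measure_triIco_mul_pow_add hμ hδ0 hδ (lt_pow_of_mem_levelIdx ha)
    (lt_pow_of_mem_goodFinset hb)

lemma measure_levelSet (hμ : ternarySpec δ μ) (hδ0 : 0 ≤ δ) (hδ : δ ≤ 1 / 2) (l : ℕ) :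
    μ (levelSet δ μ ns ks l) = ∏ m ∈ Finset.range l, μ (Kset δ μ (ns (m + 1)) (ks (m + 1))) := by
  induction l with
  | zero => simp [levelSet, levelIdx, levelExp, measure_triIco hμ, ternaryWeight, ternaryOnes]
  | succ l ih => rw [measure_levelSet_succ hμ hδ0 hδ, ih, Finset.prod_range_succ]

lemma mem_KData (d : ℕ) {l : ℕ} {g : Fin d → ℕ} (hg : ∀ j, g j ∈ levelIdx δ μ ns ks l) :
    ((fun j => (g j : ℝ) / 3 ^ levelExp ns l), 1 / 3 ^ levelExp ns l) ∈ KData d δ μ ns ks l := by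
  induction l generalizing g with
  | zero =>
    have hg0 : ∀ j, g j = 0 := fun j => by simpa [levelIdx] using hg j
    simp [KData, levelExp, hg0]
  | succ l ih =>
    choose a ha b hb hab using fun j => mem_levelIdx_succ.1 (hg j)
    refine ⟨_, ih ha, b, fun j => coe_goodFinset δ μ _ _ ▸ hb j, ?_, ?_⟩ <;>
    · try funext j
      simp only [← hab, levelExp, pow_add]
      push_cast
      field_simp

lemma pi_levelSet_subset_bigK (d l : ℕ) :
    univ.pi (fun _ : Fin d => levelSet δ μ ns ks l) ⊆ bigK d δ μ ns ks l := by
  intro x hx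
  choose g hg hxg using fun j => mem_iUnion₂.1 (hx j (mem_univ j))
  refine mem_biUnion (mem_KData d hg) fun j _ => ?_
  simpa [triIco, add_div] using hxg j

lemma pi_iInter_levelSet_subset_GammaFull (d : ℕ) :
    univ.pi (fun _ : Fin d => ⋂ l, levelSet δ μ ns ks l) ⊆ GammaFull d δ μ ns ks :=
  fun _ hx => subset_union_right <| mem_iInter₂.2 fun l _ =>
    pi_levelSet_subset_bigK d l (pi_mono (fun _ _ => iInter_subset _ l) hx)

end Levels

lemma le_one_div_27_of_entropy_le {d : ℕ} (hd : 1 ≤ d) {δ : ℝ} (hδ0 : 0 < δ) (hδ : δ ≤ 1)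
    (h : 18 * d * (δ + δ * Real.log (1 / δ)) ≤ Real.log 3) : δ ≤ 1 / 27 := by
  have hlog3 : Real.log 3 ≤ 2 := by
    rw [Real.log_le_iff_le_exp (by norm_num)]
    linarith [Real.add_one_le_exp 2]
  have hL : 0 ≤ Real.log (1 / δ) := Real.log_nonneg (one_le_one_div hδ0 hδ)
  have hd' : (1 : ℝ) ≤ d := by exact_mod_cast hd
  have h18 : 18 * (δ + δ * Real.log (1 / δ)) ≤ 2 := by
    nlinarith [mul_nonneg hδ0.le hL]
  have hδ9 : δ ≤ 1 / 9 := by nlinarith [mul_nonneg hδ0.le hL]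
  have hL2 : 2 ≤ Real.log (1 / δ) := by
    rw [Real.le_log_iff_exp_le (by positivity), le_div_iff₀ hδ0,
      show (2 : ℝ) = 1 + 1 by norm_num, Real.exp_add]
    nlinarith [Real.exp_one_lt_three, Real.exp_pos 1]
  nlinarith

lemma exp_neg_div_one_sub_le_one_sub {x : ℝ} (hx : x < 1) :
    Real.exp (-(x / (1 - x))) ≤ 1 - x := by
  have hx' : 0 < 1 - x := sub_pos.2 hx
  calc Real.exp (-(x / (1 - x))) = Real.exp (1 - (1 - x)⁻¹) := by
        congr 1; field_simp; ring
    _ ≤ Real.exp (Real.log (1 - x)) := Real.exp_le_exp.2 (Real.one_sub_inv_le_log_of_pos hx')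
    _ = 1 - x := Real.exp_log hx'

lemma exp_neg_le_prod_one_sub_pow {Z : ℝ} (hZ0 : 0 ≤ Z) (hZ1 : Z < 1) (l : ℕ) :
    Real.exp (-(Z / (1 - Z) ^ 2)) ≤ ∏ m ∈ Finset.range l, (1 - Z ^ (m + 1)) := by
  have hpow : ∀ m : ℕ, Z ^ (m + 1) ≤ Z := fun m => pow_le_of_le_one hZ0 hZ1.le m.succ_ne_zero
  have hgeom : ∑ m ∈ Finset.range l, Z ^ (m + 1) ≤ Z / (1 - Z) := by
    simpa [Finset.sum_Ico_eq_sum_range, add_comm 1] using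
      geom_sum_Ico_le_of_lt_one (m := 1) (n := l + 1) hZ0 hZ1
  have hsum : ∑ m ∈ Finset.range l, Z ^ (m + 1) / (1 - Z ^ (m + 1)) ≤ Z / (1 - Z) ^ 2 :=
    calc _ ≤ ∑ m ∈ Finset.range l, Z ^ (m + 1) / (1 - Z) :=
          Finset.sum_le_sum fun m _ => by gcongr; linarith [hpow m]
      _ ≤ Z / (1 - Z) / (1 - Z) := by rw [← Finset.sum_div]; gcongr
      _ = Z / (1 - Z) ^ 2 := by rw [div_div, sq]
  calc Real.exp (-(Z / (1 - Z) ^ 2))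
      ≤ Real.exp (∑ m ∈ Finset.range l, -(Z ^ (m + 1) / (1 - Z ^ (m + 1)))) := by
        rw [Real.exp_le_exp, Finset.sum_neg_distrib]; linarith
    _ = ∏ m ∈ Finset.range l, Real.exp (-(Z ^ (m + 1) / (1 - Z ^ (m + 1)))) := Real.exp_sum _ _
    _ ≤ ∏ m ∈ Finset.range l, (1 - Z ^ (m + 1)) :=
        Finset.prod_le_prod (fun _ _ => (Real.exp_pos _).le) fun m _ =>
          exp_neg_div_one_sub_le_one_sub ((hpow m).trans_lt hZ1)

lemma exp_le_measure_iInter_levelSet {δ : ℝ} {μ : Measure ℝ} (hμ : ternarySpec δ μ)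
    (hδ0 : 0 < δ) (hδ : δ ≤ 1 / 27) {n1 k1 : ℕ} (hn1 : 0 < n1) (hk1 : (k1 : ℝ) = 3 * δ * n1) :
    ENNReal.ofReal (Real.exp (-(Real.exp (-2 * δ ^ 2 * n1) / (1 - Real.exp (-2 * δ ^ 2 * n1)) ^ 2)))
      ≤ μ (⋂ l, levelSet δ μ (fun l => l * n1) (fun l => l * k1) l) := by
  set Z := Real.exp (-2 * δ ^ 2 * n1)
  have hZ1 : Z < 1 := Real.exp_lt_one_iff.2 (by
    have : (0 : ℝ) < n1 := Nat.cast_pos.2 hn1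
    have : 0 < δ ^ 2 * n1 := by positivity
    linarith)
  have hKset : ∀ m : ℕ, ENNReal.ofReal (1 - Z ^ (m + 1))
      ≤ μ (Kset δ μ ((m + 1) * n1) ((m + 1) * k1)) := fun m => by
    have hZm : Z ^ (m + 1) = Real.exp (-2 * δ ^ 2 * ((m + 1) * n1 : ℕ)) := by
      rw [← Real.exp_nat_mul]; push_cast; ring_nf
    rw [hZm]
    exact one_sub_exp_le_measure_Kset hμ hδ0 hδ (by push_cast; rw [hk1]; ring)
  have hlevel : ∀ l, ENNReal.ofReal (Real.exp (-(Z / (1 - Z) ^ 2)))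
      ≤ μ (levelSet δ μ (fun l => l * n1) (fun l => l * k1) l) := fun l => by
    rw [measure_levelSet hμ hδ0.le (by linarith)]
    calc _ ≤ ENNReal.ofReal (∏ m ∈ Finset.range l, (1 - Z ^ (m + 1))) :=
          ENNReal.ofReal_le_ofReal (exp_neg_le_prod_one_sub_pow (Real.exp_pos _).le hZ1 l)
      _ = ∏ m ∈ Finset.range l, ENNReal.ofReal (1 - Z ^ (m + 1)) :=
          ENNReal.ofReal_prod_of_nonneg fun m _ =>
            sub_nonneg.2 (pow_le_one₀ (Real.exp_pos _).le hZ1.le)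
      _ ≤ _ := Finset.prod_le_prod' fun m _ => hKset m
  have hfinite : μ (levelSet δ μ (fun l => l * n1) (fun l => l * k1) 0) ≠ ⊤ := by
    simp [measure_levelSet hμ hδ0.le (by linarith : δ ≤ 1 / 2)]
  exact ge_of_tendsto' (tendsto_measure_iInter_atTop
    (fun l => (measurableSet_levelSet l).nullMeasurableSet)
    (antitone_nat_of_succ_le levelSet_succ_subset) ⟨0, hfinite⟩) hlevel

/-- With parameters `n_l = l·n₁`, `k_l = l·k₁`, `k₁ = 3δn₁ ≥ 1` and
`18d(δ + δ log(1/δ)) ≤ log 3`, the `d`-fold product `ν = μ × ⋯ × μ` gives the set `Γ` of the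
iterated construction mass `ν(Γ) ≥ exp(-dZ/(1-Z)²)` where `Z = exp(-2δ²n₁)`;
in particular `ν(Γ) > 0`. -/
theorem measure_GammaFull_ge (d : ℕ) (hd : 2 ≤ d) (δ : ℝ) (hδ0 : 0 < δ)
    (hδ : δ ≤ 1 / 3) (hδd : 18 * d * (δ + δ * Real.log (1 / δ)) ≤ Real.log 3)
    (μ : Measure ℝ) (hμ : ternarySpec δ μ) (n1 k1 : ℕ) (hk1 : 1 ≤ k1)
    (hk1' : (k1 : ℝ) = 3 * δ * n1) :
    ENNReal.ofReal
        (Real.exp (-(d * Real.exp (-2 * δ ^ 2 * n1) /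
          (1 - Real.exp (-2 * δ ^ 2 * n1)) ^ 2))) ≤
      Measure.pi (fun _ : Fin d => μ)
        (GammaFull d δ μ (fun l => l * n1) (fun l => l * k1)) ∧
      0 < Measure.pi (fun _ : Fin d => μ)
        (GammaFull d δ μ (fun l => l * n1) (fun l => l * k1)) := by
  have hδs := le_one_div_27_of_entropy_le (by omega) hδ0 (by linarith) hδd
  have hn1 : 0 < n1 := Nat.pos_of_ne_zero fun h => by simp [h] at hk1'; omega
  have := sigmaFinite_of_ternarySpec hμ
  set Z := Real.exp (-2 * δ ^ 2 * n1)
  have hpi : ENNReal.ofReal (Real.exp (-(d * Z / (1 - Z) ^ 2))) ≤ Measure.pi (fun _ : Fin d => μ)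
      (univ.pi fun _ => ⋂ l, levelSet δ μ (fun l => l * n1) (fun l => l * k1) l) := by
    have hexp : Real.exp (-(d * Z / (1 - Z) ^ 2)) = Real.exp (-(Z / (1 - Z) ^ 2)) ^ d := by
      rw [← Real.exp_nat_mul]; ring_nf
    rw [Measure.pi_pi, Finset.prod_const, Finset.card_univ, Fintype.card_fin, hexp,
      ENNReal.ofReal_pow (Real.exp_pos _).le]
    gcongr
    exact exp_le_measure_iInter_levelSet hμ hδ0 hδs hn1 hk1'
  have hΓ := hpi.trans (measure_mono (pi_iInter_levelSet_subset_GammaFull d))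
  exact ⟨hΓ, (ENNReal.ofReal_pos.2 (Real.exp_pos _)).trans_le hΓ⟩
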